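/- For words u, v of length at least k-1 (k ≥ 1), u ∼_k v if and only if u and v have the same prefix of length k-1, the same suffix of length k-1, and |u|_w = |v|_w for every word w of length exactly k. -/

import Mathlib

/-!
Every occurrence of `w` in `u`, except one at the very beginning, extends to an occurrence of
some `a :: w`, so `occ w u = ∑ₐ occ (a :: w) u + [w <+: u]`. Hence, once the counts of all words
one letter longer than `w` agree in `u` and `v`, the counts of `w` agree iff `w` is a prefix of
both words or of neither. Starting from length `k`, this reads off the prefix of length `k - 1`
from the counts, and conversely recovers all counts of length `< k` from those of length `k` and
that prefix. The suffix is handled by reversing both words.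
-/

/-- Number of occurrences of `w` as a (contiguous) factor of `u`. -/
def occ {A : Type*} [DecidableEq A] (w u : List A) : ℕ :=
  ((Finset.range (u.length + 1 - w.length)).filter
    (fun i => (u.drop i).take w.length = w)).card

/-- `k`-abelian equivalence. -/
def KAbelianEq {A : Type*} [DecidableEq A] (k : ℕ) (u v : List A) : Prop :=
  ∀ w : List A, w ≠ [] → w.length ≤ k → occ w u = occ w v

section

variable {A : Type*} [DecidableEq A]

theorem occ_eq_sum (w u : List A) :
    occ w u = ∑ i ∈ Finset.range (u.length + 1 - w.length),
      if (u.drop i).take w.length = w then 1 else 0 :=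
  Finset.card_filter _ _

theorem occ_nil (w : List A) : occ w [] = if w = [] then 1 else 0 := by
  cases w <;> simp [occ]

theorem occ_cons (w u : List A) (a : A) :
    occ w (a :: u) = occ w u + if w <+: a :: u then 1 else 0 := by
  rcases le_or_gt w.length (u.length + 1) with hw | hw
  · rw [occ_eq_sum, occ_eq_sum, List.length_cons,
      show u.length + 1 + 1 - w.length = u.length + 1 - w.length + 1 by omega,
      Finset.sum_range_succ']
    simp [List.prefix_iff_eq_take (l₁ := w), eq_comm]
  · have hnp : ¬ w <+: a :: u := fun h => by simpa using h.length_le.trans_lt' hw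
    rw [occ_eq_sum, occ_eq_sum, Nat.sub_eq_zero_of_le (by simp; omega),
      Nat.sub_eq_zero_of_le (by omega)]
    simp [hnp]

theorem occ_eq_sum_occ_cons_add {S : Finset A} {u : List A} (hS : ∀ a ∈ u, a ∈ S)
    (w : List A) : occ w u = ∑ a ∈ S, occ (a :: w) u + if w <+: u then 1 else 0 := by
  induction u with
  | nil => simp [occ_nil]
  | cons b u ih =>
    have hb : b ∈ S := hS b List.mem_cons_self
    rw [occ_cons, ih fun a ha => hS a (List.mem_cons_of_mem _ ha)]
    -- `a :: w <+: b :: u ↔ a = b ∧ w <+: u`, so the new leading occurrences add up to `[w <+: u]`.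
    simp [occ_cons, Finset.sum_add_distrib, List.cons_prefix_cons, ite_and, hb]

theorem occ_reverse (w u : List A) : occ w.reverse u.reverse = occ w u := by
  rw [occ_eq_sum, occ_eq_sum, List.length_reverse, List.length_reverse,
    ← Finset.sum_range_reflect]
  refine Finset.sum_congr rfl fun i hi => ?_
  rw [Finset.mem_range] at hi
  have key : (u.reverse.drop (u.length + 1 - w.length - 1 - i)).take w.length
      = ((u.drop i).take w.length).reverse := by
    rw [List.drop_reverse, List.take_reverse, List.take_drop, List.length_take]
    congr 3 <;> omega
  simp [key]

theorem occ_eq_iff_isPrefix_iff {w u v : List A} (h : ∀ a, occ (a :: w) u = occ (a :: w) v) :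
    occ w u = occ w v ↔ (w <+: u ↔ w <+: v) := by
  rw [occ_eq_sum_occ_cons_add (S := u.toFinset ∪ v.toFinset) (fun a ha => by simp [ha]) w,
    occ_eq_sum_occ_cons_add (S := u.toFinset ∪ v.toFinset) (fun a ha => by simp [ha]) w]
  simp only [h, add_right_inj]
  split_ifs <;> simp_all

theorem KAbelianEq.reverse {k : ℕ} {u v : List A} (h : KAbelianEq k u v) :
    KAbelianEq k u.reverse v.reverse := by
  intro w hw hlen
  rw [← w.reverse_reverse, occ_reverse, occ_reverse]
  exact h _ (by simpa using hw) (by simpa using hlen)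

theorem KAbelianEq.take_eq {m : ℕ} {u v : List A} (h : KAbelianEq (m + 1) u v)
    (hm : m ≤ u.length) : u.take m = v.take m := by
  rcases Nat.eq_zero_or_pos m with rfl | hpos
  · simp
  have hlen : (u.take m).length = m := List.length_take_of_le hm
  have hpref : u.take m <+: v :=
    ((occ_eq_iff_isPrefix_iff fun a => h _ (List.cons_ne_nil _ _) (by simp [hlen])).1
      (h _ (List.ne_nil_of_length_pos (by omega)) (by omega))).1 (List.take_prefix _ _)
  conv_lhs => rw [List.prefix_iff_eq_take.1 hpref, hlen]

theorem KAbelianEq.drop_eq {m : ℕ} {u v : List A} (h : KAbelianEq (m + 1) u v)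
    (hm : m ≤ u.length) : u.drop (u.length - m) = v.drop (v.length - m) := by
  simpa [List.take_reverse] using KAbelianEq.take_eq (KAbelianEq.reverse h) (by simpa using hm)

theorem kabelianEq_of_take_eq_of_occ_eq {m : ℕ} {u v : List A} (hp : u.take m = v.take m)
    (hocc : ∀ w : List A, w.length = m + 1 → occ w u = occ w v) : KAbelianEq (m + 1) u v := by
  suffices ∀ j w, w.length + j = m + 1 → occ w u = occ w v from
    fun w _ hw => this (m + 1 - w.length) w (by omega)
  intro j
  induction j with
  | zero => exact hocc
  | succ j ih =>
    intro w hw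
    have hwm : w.length ≤ m := by omega
    have hpre : w <+: u ↔ w <+: v := by
      simpa only [List.prefix_take_iff, hwm, and_true] using Iff.of_eq (congrArg (w <+: ·) hp)
    exact (occ_eq_iff_isPrefix_iff fun a => ih (a :: w) (by simp; omega)).2 hpre

end

theorem kabelian_iff_prefix_suffix_and_length_k_counts_general {A : Type*} [DecidableEq A]
    (k : ℕ) (hk : 1 ≤ k) (u v : List A)
    (hu : k - 1 ≤ u.length) :
    KAbelianEq k u v ↔
      u.take (k - 1) = v.take (k - 1) ∧
      u.drop (u.length - (k - 1)) = v.drop (v.length - (k - 1)) ∧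
      ∀ w : List A, w.length = k → occ w u = occ w v := by
  obtain ⟨m, rfl⟩ : ∃ m, k = m + 1 := ⟨k - 1, by omega⟩
  rw [Nat.add_sub_cancel] at hu ⊢
  exact ⟨fun h => ⟨KAbelianEq.take_eq h hu, KAbelianEq.drop_eq h hu,
      fun w hw => h w (List.ne_nil_of_length_pos (by omega)) hw.le⟩,
    fun ⟨hp, _, hocc⟩ => kabelianEq_of_take_eq_of_occ_eq hp hocc⟩

theorem kabelian_iff_prefix_suffix_and_length_k_counts {A : Type*} [DecidableEq A]
    (k : ℕ) (hk : 1 ≤ k) (u v : List A)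
    (hu : k - 1 ≤ u.length) (hv : k - 1 ≤ v.length) :
    KAbelianEq k u v ↔
      u.take (k - 1) = v.take (k - 1) ∧
      u.drop (u.length - (k - 1)) = v.drop (v.length - (k - 1)) ∧
      ∀ w : List A, w.length = k → occ w u = occ w v :=
  kabelian_iff_prefix_suffix_and_length_k_counts_general k hk u v hu
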